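/- arXiv:1208.2463 — 2 statements merged into one kernel-verified Lean document; each statement's English description precedes it below -/
import Mathlib

section
/- For any constant C, the function β_C(H) = Σ_{L ∈ 𝓛(H)} C^{p(L)}, where 𝓛(H) is the set of linear subgraphs of H (including the empty one) and p(L) the number of components of L, is invariant under contraction of contractible edges: if H' is obtained from a semistable graph H by contracting a contractible edge, then β_C(H) = β_C(H'). -/
open Relation

structure MDigraph where
  V : Type
  E : Type
  [hV : Finite V]
  [hE : Finite E]
  src : E → V
  tgt : E → V

attribute [instance] MDigraph.hV MDigraph.hE

namespace MDigraph

noncomputable def degOut (G : MDigraph) (v : G.V) : ℕ := Nat.card {e : G.E // G.src e = v}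
noncomputable def degIn (G : MDigraph) (v : G.V) : ℕ := Nat.card {e : G.E // G.tgt e = v}

def Semistable (G : MDigraph) : Prop :=
  ∀ v : G.V, 1 ≤ G.degIn v ∧ 1 ≤ G.degOut v ∧ 3 ≤ G.degIn v + G.degOut v

def Stable (G : MDigraph) : Prop :=
  ∀ v : G.V, 2 ≤ G.degIn v ∧ 2 ≤ G.degOut v

def Contractible (G : MDigraph) (e : G.E) : Prop :=
  G.src e ≠ G.tgt e ∧ (G.degOut (G.src e) = 1 ∨ G.degIn (G.tgt e) = 1)

def mergeRel (G : MDigraph) (e0 : G.E) (a b : G.V) : Prop :=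
  a = b ∨ ((a = G.src e0 ∨ a = G.tgt e0) ∧ (b = G.src e0 ∨ b = G.tgt e0))

def contract (G : MDigraph) (e0 : G.E) : MDigraph where
  V := Quot (G.mergeRel e0)
  E := {e : G.E // e ≠ e0}
  src e := Quot.mk _ (G.src e.1)
  tgt e := Quot.mk _ (G.tgt e.1)

structure Iso (G H : MDigraph) where
  vEquiv : G.V ≃ H.V
  eEquiv : G.E ≃ H.E
  src_map : ∀ e, H.src (eEquiv e) = vEquiv (G.src e)
  tgt_map : ∀ e, H.tgt (eEquiv e) = vEquiv (G.tgt e)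

def Adj (G : MDigraph) (a b : G.V) : Prop := ∃ e, G.src e = a ∧ G.tgt e = b

def Strong (G : MDigraph) : Prop := ∀ a b : G.V, ReflTransGen G.Adj a b

def ContractStep (G H : MDigraph) : Prop :=
  ∃ e0 : G.E, G.Contractible e0 ∧ Nonempty (Iso (G.contract e0) H)

def IsStabilization (G H : MDigraph) : Prop :=
  ReflTransGen ContractStep G H ∧ H.Stable

def Stabilizable (G : MDigraph) : Prop := ∃ H, G.IsStabilization H

def IsLinear (G : MDigraph) (L : Set G.E) : Prop :=
  ∀ v : G.V, Nat.card {e : G.E // e ∈ L ∧ G.src e = v} = Nat.card {e : G.E // e ∈ L ∧ G.tgt e = v}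
    ∧ Nat.card {e : G.E // e ∈ L ∧ G.src e = v} ≤ 1

def LAdj (G : MDigraph) (L : Set G.E) (a b : G.V) : Prop := ∃ e ∈ L, G.src e = a ∧ G.tgt e = b

def supp (G : MDigraph) (L : Set G.E) : Set G.V := {v | ∃ e ∈ L, G.src e = v ∨ G.tgt e = v}

noncomputable def components (G : MDigraph) (L : Set G.E) : ℕ :=
  Nat.card (Quot (fun a b : G.supp L => G.LAdj L a.1 b.1))

noncomputable def adjMatrix (G : MDigraph) : Matrix G.V G.V ℤ :=
  Matrix.of fun a b => (Nat.card {e : G.E // G.src e = a ∧ G.tgt e = b} : ℤ)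

open Classical in
noncomputable def detIA (G : MDigraph) : ℤ :=
  letI := Fintype.ofFinite G.V
  ((1 : Matrix G.V G.V ℤ) - G.adjMatrix).det

noncomputable def weight (G : MDigraph) : ℤ := (Nat.card G.E : ℤ) - (Nat.card G.V : ℤ)

noncomputable def numLinear (G : MDigraph) : ℕ := Nat.card {L : Set G.E // G.IsLinear L}

end MDigraph

noncomputable example (G : MDigraph) (C : ℤ) : ℤ := ∑ᶠ L : {L : Set G.E // G.IsLinear L}, C ^ G.components L.1

/-!
Write `s → t` for the contracted edge `e0`. Deleting `e0` from a linear subgraph `L` of `H` gives a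
linear subgraph of `H / e0` with the same number of cycles: if `e0 ∈ L`, its cycle just becomes one
edge shorter; if `e0 ∉ L`, then, since `e0` is the only edge leaving `s` or the only edge entering
`t`, `L` meets at most one of `s`, `t`, and merging them changes nothing. Conversely, a linear
subgraph of `H / e0` lifts in exactly one way: `e0` has to be put back precisely when its cycle
enters the merged vertex at `s` and leaves it at `t`. Linearity is a condition on in- and
out-degrees at each vertex, so the whole correspondence reduces to degree counts at `s` and `t`.
-/
section FiberCard

variable {α β γ : Type*}

noncomputable def fiberCard (f : α → β) (S : Set α) (b : β) : ℕ :=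
  Nat.card {a // a ∈ S ∧ f a = b}

lemma fiberCard_eq_ncard (f : α → β) (S : Set α) (b : β) :
    fiberCard f S b = {a | a ∈ S ∧ f a = b}.ncard :=
  Nat.card_coe_set_eq _

lemma fiberCard_pos_iff [Finite α] {f : α → β} {S : Set α} {b : β} :
    0 < fiberCard f S b ↔ ∃ a ∈ S, f a = b := by
  rw [fiberCard, Nat.card_pos_iff, and_iff_left Subtype.finite, nonempty_subtype]

lemma fiberCard_eq_zero {f : α → β} {S : Set α} {b : β} (h : ∀ a ∈ S, f a ≠ b) :
    fiberCard f S b = 0 :=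
  Nat.card_eq_zero.mpr (Or.inl ⟨fun a => h a.1 a.2.1 a.2.2⟩)

open Classical in
lemma fiberCard_eq_fiberCard_subtype_add [Finite α] (f : α → β) (S : Set α) (b : β) (x : α) :
    fiberCard f S b = fiberCard (fun a : {a // a ≠ x} => f a) (Subtype.val ⁻¹' S) b +
      if x ∈ S ∧ f x = b then 1 else 0 := by
  have himage : Subtype.val ''
      {a : {a // a ≠ x} | a ∈ (Subtype.val ⁻¹' S : Set {a // a ≠ x}) ∧ f a = b} =
        {a | a ∈ S ∧ f a = b} \ {x} := by
    ext a
    simp [and_assoc]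
  rw [fiberCard_eq_ncard, fiberCard_eq_ncard,
    ← Set.ncard_image_of_injective _ Subtype.val_injective, himage]
  split_ifs with hx
  · exact (Set.ncard_sdiff_singleton_add_one (s := {a | a ∈ S ∧ f a = b}) hx).symm
  · rw [Set.sdiff_singleton_eq_self (s := {a | a ∈ S ∧ f a = b}) hx, add_zero]

lemma fiberCard_comp_of_fiber_eq_singleton {q : β → γ} {b : β} (hq : ∀ y, q y = q b ↔ y = b)
    (f : α → β) (S : Set α) : fiberCard (q ∘ f) S (q b) = fiberCard f S b :=
  Nat.card_congr (Equiv.subtypeEquivRight fun a => and_congr_right' (hq (f a)))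

lemma fiberCard_comp_of_fiber_eq_pair [Finite α] {q : β → γ} {b b' : β} (hb : b ≠ b')
    (hq : ∀ y, q y = q b ↔ y = b ∨ y = b') (f : α → β) (S : Set α) :
    fiberCard (q ∘ f) S (q b) = fiberCard f S b + fiberCard f S b' := by
  have hunion : {a | a ∈ S ∧ q (f a) = q b} = {a | a ∈ S ∧ f a = b} ∪ {a | a ∈ S ∧ f a = b'} := by
    ext a
    simp [hq, and_or_left]
  have hdisj : Disjoint {a | a ∈ S ∧ f a = b} {a | a ∈ S ∧ f a = b'} :=
    Set.disjoint_left.mpr fun a ha ha' => hb (ha.2.symm.trans ha'.2)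
  simp only [fiberCard_eq_ncard, Function.comp_apply]
  rw [hunion, Set.ncard_union_eq hdisj]

end FiberCard

lemma forall_iff_forall_ne_ne {α : Type*} {P : α → Prop} (a b : α) :
    (∀ v, P v) ↔ (∀ v, v ≠ a → v ≠ b → P v) ∧ P a ∧ P b := by
  refine ⟨fun h => ⟨fun v _ _ => h v, h a, h b⟩, fun ⟨h, ha, hb⟩ v => ?_⟩
  by_cases hva : v = a
  · exact hva ▸ ha
  by_cases hvb : v = b
  · exact hvb ▸ hb
  exact h v hva hvb

theorem Quot.card_eq_of_surjective {α β : Type*} {r : α → α → Prop} {s : β → β → Prop}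
    (f : α → β) (hf : Function.Surjective f)
    (hr : ∀ a b, r a b → Quot.mk s (f a) = Quot.mk s (f b))
    (hs : ∀ x y, s x y → ∃ a b, f a = x ∧ f b = y ∧ EqvGen r a b)
    (hfiber : ∀ a b, f a = f b → EqvGen r a b) :
    Nat.card (Quot r) = Nat.card (Quot s) := by
  have hlift : ∀ x y, EqvGen s x y → ∀ a b, f a = x → f b = y → EqvGen r a b := by
    intro x y hxy
    induction hxy with
    | rel x y hxy =>
      rintro a b rfl rfl
      obtain ⟨a', b', ha, hb, hab⟩ := hs _ _ hxy
      exact (hfiber a a' ha.symm).trans _ _ _ (hab.trans _ _ _ (hfiber b' b hb))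
    | refl x => rintro a b rfl hb; exact hfiber a b hb.symm
    | symm x y _ ih => exact fun a b ha hb => (ih b a hb ha).symm
    | trans x y z _ _ ih₁ ih₂ =>
      intro a b ha hb
      obtain ⟨c, rfl⟩ := hf y
      exact (ih₁ a c ha rfl).trans _ _ _ (ih₂ c b rfl hb)
  refine Nat.card_eq_of_bijective
    (Quot.lift (fun a => Quot.mk s (f a)) hr) ⟨?_, ?_⟩
  · rintro ⟨a⟩ ⟨b⟩ h
    exact Quot.eqvGen_sound (hlift _ _ (Quot.eqvGen_exact h) a b rfl rfl)
  · rintro ⟨x⟩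
    obtain ⟨a, rfl⟩ := hf x
    exact ⟨Quot.mk r a, rfl⟩

namespace MDigraph

def IsLinearAt (G : MDigraph) (L : Set G.E) (v : G.V) : Prop :=
  fiberCard G.src L v = fiberCard G.tgt L v ∧ fiberCard G.src L v ≤ 1

lemma isLinear_iff_forall_isLinearAt {G : MDigraph} {L : Set G.E} :
    G.IsLinear L ↔ ∀ v, G.IsLinearAt L v := Iff.rfl

lemma IsLinear.exists_src_iff_exists_tgt {G : MDigraph} {L : Set G.E} (hL : G.IsLinear L)
    (v : G.V) : (∃ e ∈ L, G.src e = v) ↔ ∃ e ∈ L, G.tgt e = v := by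
  have hbalanced : fiberCard G.src L v = fiberCard G.tgt L v := (hL v).1
  rw [← fiberCard_pos_iff, ← fiberCard_pos_iff, hbalanced]

lemma IsLinear.mem_supp_iff_exists_src {G : MDigraph} {L : Set G.E} (hL : G.IsLinear L)
    {v : G.V} : v ∈ G.supp L ↔ ∃ e ∈ L, G.src e = v := by
  refine ⟨fun ⟨e, heL, hev⟩ => hev.elim (fun h => ⟨e, heL, h⟩) fun h => ?_,
    fun ⟨e, heL, h⟩ => ⟨e, heL, Or.inl h⟩⟩
  exact (hL.exists_src_iff_exists_tgt v).2 ⟨e, heL, h⟩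

lemma IsLinear.mem_supp_iff_exists_tgt {G : MDigraph} {L : Set G.E} (hL : G.IsLinear L)
    {v : G.V} : v ∈ G.supp L ↔ ∃ e ∈ L, G.tgt e = v :=
  hL.mem_supp_iff_exists_src.trans (hL.exists_src_iff_exists_tgt v)

def delete (G : MDigraph) (e0 : G.E) : MDigraph where
  V := G.V
  E := {e : G.E // e ≠ e0}
  src e := G.src e.1
  tgt e := G.tgt e.1

def contractEdges (G : MDigraph) (e0 : G.E) (L : Set G.E) : Set (G.contract e0).E :=
  Subtype.val ⁻¹' L

section Contract

variable {H : MDigraph} {e0 : H.E}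

lemma mergeRel_equivalence : Equivalence (H.mergeRel e0) where
  refl _ := Or.inl rfl
  symm := by
    rintro a b (rfl | ⟨ha, hb⟩)
    exacts [Or.inl rfl, Or.inr ⟨hb, ha⟩]
  trans := by
    rintro a b c (rfl | ⟨ha, hb⟩) (rfl | ⟨hb', hc⟩)
    exacts [Or.inl rfl, Or.inr ⟨hb', hc⟩, Or.inr ⟨ha, hb⟩, Or.inr ⟨ha, hc⟩]

lemma mk_eq_mk_iff {a b : H.V} :
    Quot.mk (H.mergeRel e0) a = Quot.mk (H.mergeRel e0) b ↔ H.mergeRel e0 a b :=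
  Quot.eq.trans mergeRel_equivalence.eqvGen_iff

lemma mk_eq_mk_of_ne {v : H.V} (hs : v ≠ H.src e0) (ht : v ≠ H.tgt e0) (y : H.V) :
    Quot.mk (H.mergeRel e0) y = Quot.mk (H.mergeRel e0) v ↔ y = v := by
  rw [mk_eq_mk_iff]
  constructor
  · rintro (h | ⟨-, rfl | rfl⟩)
    exacts [h, absurd rfl hs, absurd rfl ht]
  · exact Or.inl

lemma mk_eq_mk_src (y : H.V) :
    Quot.mk (H.mergeRel e0) y = Quot.mk (H.mergeRel e0) (H.src e0) ↔
      y = H.src e0 ∨ y = H.tgt e0 := by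
  rw [mk_eq_mk_iff]
  exact ⟨fun h => h.elim (Or.inl ·) (·.1), fun h => Or.inr ⟨h, Or.inl rfl⟩⟩

lemma mk_tgt_eq_mk_src :
    Quot.mk (H.mergeRel e0) (H.tgt e0) = Quot.mk (H.mergeRel e0) (H.src e0) :=
  (mk_eq_mk_src _).mpr (Or.inr rfl)

lemma eq_of_contractEdges_eq {L L' : Set H.E} (h : H.contractEdges e0 L = H.contractEdges e0 L')
    (h0 : e0 ∈ L ↔ e0 ∈ L') : L = L' := by
  ext e
  by_cases he : e = e0
  · exact he ▸ h0
  · exact Set.ext_iff.mp h ⟨e, he⟩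

open Classical in
lemma isLinear_iff_delete (hst : H.src e0 ≠ H.tgt e0) (L : Set H.E) :
    H.IsLinear L ↔
      (∀ v, v ≠ H.src e0 → v ≠ H.tgt e0 → (H.delete e0).IsLinearAt (H.contractEdges e0 L) v) ∧
      (fiberCard (H.delete e0).src (H.contractEdges e0 L) (H.src e0) + (if e0 ∈ L then 1 else 0) =
          fiberCard (H.delete e0).tgt (H.contractEdges e0 L) (H.src e0) ∧
        fiberCard (H.delete e0).src (H.contractEdges e0 L) (H.src e0) + (if e0 ∈ L then 1 else 0)
          ≤ 1) ∧
      (fiberCard (H.delete e0).src (H.contractEdges e0 L) (H.tgt e0) =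
          fiberCard (H.delete e0).tgt (H.contractEdges e0 L) (H.tgt e0) +
            (if e0 ∈ L then 1 else 0) ∧
        fiberCard (H.delete e0).src (H.contractEdges e0 L) (H.tgt e0) ≤ 1) := by
  have hsrc (v : H.V) : fiberCard H.src L v = fiberCard (H.delete e0).src (H.contractEdges e0 L) v +
      if e0 ∈ L ∧ H.src e0 = v then 1 else 0 :=
    fiberCard_eq_fiberCard_subtype_add _ _ _ _
  have htgt (v : H.V) : fiberCard H.tgt L v = fiberCard (H.delete e0).tgt (H.contractEdges e0 L) v +
      if e0 ∈ L ∧ H.tgt e0 = v then 1 else 0 :=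
    fiberCard_eq_fiberCard_subtype_add _ _ _ _
  rw [isLinear_iff_forall_isLinearAt, forall_iff_forall_ne_ne (H.src e0) (H.tgt e0)]
  refine and_congr (forall₃_congr fun v hs ht => ?_) (and_congr ?_ ?_) <;>
    simp only [IsLinearAt, hsrc, htgt]
  · simp [Ne.symm hs, Ne.symm ht]
  · simp [hst.symm]
  · simp [hst]

lemma isLinear_contract_iff (hst : H.src e0 ≠ H.tgt e0) (M : Set (H.contract e0).E) :
    (H.contract e0).IsLinear M ↔
      (∀ v, v ≠ H.src e0 → v ≠ H.tgt e0 → (H.delete e0).IsLinearAt M v) ∧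
      (fiberCard (H.delete e0).src M (H.src e0) + fiberCard (H.delete e0).src M (H.tgt e0) =
          fiberCard (H.delete e0).tgt M (H.src e0) + fiberCard (H.delete e0).tgt M (H.tgt e0) ∧
        fiberCard (H.delete e0).src M (H.src e0) + fiberCard (H.delete e0).src M (H.tgt e0)
          ≤ 1) := by
  refine (isLinear_iff_forall_isLinearAt.trans Quot.mk_surjective.forall).trans ?_
  rw [forall_iff_forall_ne_ne (H.src e0) (H.tgt e0), mk_tgt_eq_mk_src, and_self]
  refine and_congr (forall₃_congr fun v hs ht => ?_) ?_ <;> unfold IsLinearAt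
  · have hsrc : fiberCard (H.contract e0).src M (Quot.mk _ v) = fiberCard (H.delete e0).src M v :=
      fiberCard_comp_of_fiber_eq_singleton (mk_eq_mk_of_ne hs ht) _ M
    have htgt : fiberCard (H.contract e0).tgt M (Quot.mk _ v) = fiberCard (H.delete e0).tgt M v :=
      fiberCard_comp_of_fiber_eq_singleton (mk_eq_mk_of_ne hs ht) _ M
    rw [hsrc, htgt]
  · have hsrc : fiberCard (H.contract e0).src M (Quot.mk _ (H.src e0)) =
        fiberCard (H.delete e0).src M (H.src e0) + fiberCard (H.delete e0).src M (H.tgt e0) :=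
      fiberCard_comp_of_fiber_eq_pair hst mk_eq_mk_src _ M
    have htgt : fiberCard (H.contract e0).tgt M (Quot.mk _ (H.src e0)) =
        fiberCard (H.delete e0).tgt M (H.src e0) + fiberCard (H.delete e0).tgt M (H.tgt e0) :=
      fiberCard_comp_of_fiber_eq_pair hst mk_eq_mk_src _ M
    rw [hsrc, htgt]

lemma Contractible.forall_src_eq_or_forall_tgt_eq (hc : H.Contractible e0) :
    (∀ e, H.src e = H.src e0 → e = e0) ∨ (∀ e, H.tgt e = H.tgt e0 → e = e0) := by
  have key {f : H.E → H.V} (h : Nat.card {e // f e = f e0} = 1) (e : H.E) (he : f e = f e0) :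
      e = e0 :=
    congrArg Subtype.val ((Nat.card_eq_one_iff_unique.mp h).1.elim ⟨e, he⟩ ⟨e0, rfl⟩)
  exact hc.2.imp key key

lemma Contractible.fiberCard_delete_eq_zero (hc : H.Contractible e0) (M : Set (H.contract e0).E) :
    fiberCard (H.delete e0).src M (H.src e0) = 0 ∨ fiberCard (H.delete e0).tgt M (H.tgt e0) = 0 :=
  hc.forall_src_eq_or_forall_tgt_eq.imp (fun h => fiberCard_eq_zero fun e _ he => e.2 (h e.1 he))
    (fun h => fiberCard_eq_zero fun e _ he => e.2 (h e.1 he))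

lemma Contractible.src_notMem_supp_or_tgt_notMem_supp (hc : H.Contractible e0) {L : Set H.E}
    (hL : H.IsLinear L) (he0 : e0 ∉ L) : H.src e0 ∉ H.supp L ∨ H.tgt e0 ∉ H.supp L := by
  rw [hL.mem_supp_iff_exists_src, hL.mem_supp_iff_exists_tgt]
  rcases hc.forall_src_eq_or_forall_tgt_eq with h | h
  · exact Or.inl fun ⟨e, heL, he⟩ => he0 (h e he ▸ heL)
  · exact Or.inr fun ⟨e, heL, he⟩ => he0 (h e he ▸ heL)

lemma IsLinear.contractEdges (hc : H.Contractible e0) {L : Set H.E} (hL : H.IsLinear L) :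
    (H.contract e0).IsLinear (H.contractEdges e0 L) := by
  rw [isLinear_iff_delete hc.1] at hL
  refine (isLinear_contract_iff hc.1 _).2 ⟨hL.1, ?_⟩
  have := hc.fiberCard_delete_eq_zero (H.contractEdges e0 L)
  split_ifs at hL <;> omega

lemma IsLinear.eq_of_contractEdges_eq (hst : H.src e0 ≠ H.tgt e0) {L L' : Set H.E}
    (hL : H.IsLinear L) (hL' : H.IsLinear L')
    (h : H.contractEdges e0 L = H.contractEdges e0 L') : L = L' := by
  refine MDigraph.eq_of_contractEdges_eq h ?_
  rw [isLinear_iff_delete hst] at hL hL'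
  rw [h] at hL
  have hcount := hL.2.1.1.trans hL'.2.1.1.symm
  split_ifs at hcount <;> simp_all

lemma exists_isLinear_contractEdges_eq (hc : H.Contractible e0) {M : Set (H.contract e0).E}
    (hM : (H.contract e0).IsLinear M) : ∃ L, H.IsLinear L ∧ H.contractEdges e0 L = M := by
  classical
  rw [isLinear_contract_iff hc.1] at hM
  -- `e0` is put back exactly when the merged vertex is entered at the source of `e0` and left
  -- at its target.
  let p : Prop := fiberCard (H.delete e0).tgt M (H.src e0) = 1 ∧
    fiberCard (H.delete e0).src M (H.tgt e0) = 1
  let L : Set H.E := {e | if h : e = e0 then p else ⟨e, h⟩ ∈ M}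
  have hpre : H.contractEdges e0 L = M := by
    ext ⟨e, he⟩
    exact iff_of_eq (dif_neg he)
  have he0 : e0 ∈ L ↔ p := by simp [L]
  refine ⟨L, ?_, hpre⟩
  rw [isLinear_iff_delete hc.1, hpre]
  have := hc.fiberCard_delete_eq_zero M
  refine ⟨hM.1, ?_⟩
  simp only [he0]
  split_ifs with hp <;> omega

lemma mk_mem_supp_contractEdges (hst : H.src e0 ≠ H.tgt e0) {L : Set H.E} (hL : H.IsLinear L)
    {a : H.V} (ha : a ∈ H.supp L) :
    Quot.mk (H.mergeRel e0) a ∈ (H.contract e0).supp (H.contractEdges e0 L) := by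
  obtain ⟨e, heL, hea⟩ := ha
  by_cases he : e = e0
  · rw [he] at heL hea
    -- `e0` enters the target of `e0`, so some other edge of `L` leaves it.
    have hout := ((isLinear_iff_delete hst L).1 hL).2.2.1
    rw [if_pos heL] at hout
    obtain ⟨f, hfL, hf⟩ := fiberCard_pos_iff.mp ((Nat.succ_pos _).trans_eq hout.symm)
    refine ⟨f, hfL, Or.inl ?_⟩
    change Quot.mk _ (H.src f.1) = _
    rw [show H.src f.1 = H.tgt e0 from hf, mk_tgt_eq_mk_src]
    rcases hea with rfl | rfl
    exacts [rfl, mk_tgt_eq_mk_src.symm]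
  · exact ⟨⟨e, he⟩, heL, hea.imp (congrArg _) (congrArg _)⟩

lemma eqvGen_lAdj_of_mergeRel (hc : H.Contractible e0) {L : Set H.E} (hL : H.IsLinear L)
    {a b : H.V} (ha : a ∈ H.supp L) (hb : b ∈ H.supp L) (hab : H.mergeRel e0 a b) :
    EqvGen (fun a b : H.supp L => H.LAdj L a b) ⟨a, ha⟩ ⟨b, hb⟩ := by
  rcases hab with rfl | ⟨ha', hb'⟩
  · exact EqvGen.refl _
  by_cases he0 : e0 ∈ L
  · rcases ha' with rfl | rfl <;> rcases hb' with rfl | rfl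
    exacts [EqvGen.refl _, EqvGen.rel _ _ ⟨e0, he0, rfl, rfl⟩,
      (EqvGen.rel _ _ ⟨e0, he0, rfl, rfl⟩).symm, EqvGen.refl _]
  · rcases hc.src_notMem_supp_or_tgt_notMem_supp hL he0 with h | h <;>
      rcases ha' with rfl | rfl <;> rcases hb' with rfl | rfl <;>
      first
        | exact EqvGen.refl _
        | exact absurd ha h
        | exact absurd hb h

theorem components_contractEdges (hc : H.Contractible e0) {L : Set H.E} (hL : H.IsLinear L) :
    (H.contract e0).components (H.contractEdges e0 L) = H.components L := by
  refine (Quot.card_eq_of_surjective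
    (fun a : H.supp L => ⟨Quot.mk _ a.1, mk_mem_supp_contractEdges hc.1 hL a.2⟩) ?_ ?_ ?_ ?_).symm
  · rintro ⟨x, e, he, rfl | rfl⟩
    exacts [⟨⟨H.src e.1, e.1, he, Or.inl rfl⟩, rfl⟩, ⟨⟨H.tgt e.1, e.1, he, Or.inr rfl⟩, rfl⟩]
  · rintro a b ⟨e, he, hsrc, htgt⟩
    by_cases he0 : e = e0
    · rw [he0] at hsrc htgt
      exact congrArg (Quot.mk _) (Subtype.ext
        (mk_eq_mk_iff.mpr (Or.inr ⟨Or.inl hsrc.symm, Or.inr htgt.symm⟩)))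
    · exact Quot.sound ⟨⟨e, he0⟩, he, congrArg _ hsrc, congrArg _ htgt⟩
  · rintro x y ⟨e, he, hx, hy⟩
    exact ⟨⟨H.src e.1, e.1, he, Or.inl rfl⟩, ⟨H.tgt e.1, e.1, he, Or.inr rfl⟩, Subtype.ext hx,
      Subtype.ext hy, EqvGen.rel _ _ ⟨e.1, he, rfl, rfl⟩⟩
  · exact fun a b hab =>
      eqvGen_lAdj_of_mergeRel hc hL a.2 b.2 (mk_eq_mk_iff.mp (congrArg Subtype.val hab))

noncomputable def linearContractEquiv (hc : H.Contractible e0) :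
    {L : Set H.E // H.IsLinear L} ≃ {M : Set (H.contract e0).E // (H.contract e0).IsLinear M} :=
  Equiv.ofBijective (fun L => ⟨H.contractEdges e0 L, L.2.contractEdges hc⟩)
    ⟨fun L L' h => Subtype.ext (L.2.eq_of_contractEdges_eq hc.1 L'.2 (congrArg Subtype.val h)),
      fun M => by
        obtain ⟨L, hL, hLM⟩ := exists_isLinear_contractEdges_eq hc M.2
        exact ⟨⟨L, hL⟩, Subtype.ext hLM⟩⟩

end Contract

end MDigraph

theorem betaC_invariant_general (R : Type*) [CommRing R] (C : R) (H : MDigraph)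
    (e0 : H.E) (hc : H.Contractible e0) :
    ∑ᶠ L : {L : Set H.E // H.IsLinear L}, C ^ H.components L.1 =
      ∑ᶠ L : {L : Set (H.contract e0).E // (H.contract e0).IsLinear L},
        C ^ (H.contract e0).components L.1 := by
  rw [← finsum_comp_equiv (MDigraph.linearContractEquiv hc)]
  exact finsum_congr fun L => congrArg (C ^ ·) (MDigraph.components_contractEdges hc L.2).symm

/-- For any constant `C`, the sum `β_C(H) = Σ_{L linear} C^{p(L)}` is
invariant under contraction of a contractible edge of a semistable graph. -/
theorem betaC_invariant (R : Type*) [CommRing R] (C : R) (H : MDigraph)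
    (hss : H.Semistable) (e0 : H.E) (hc : H.Contractible e0) :
    ∑ᶠ L : {L : Set H.E // H.IsLinear L}, C ^ H.components L.1 =
      ∑ᶠ L : {L : Set (H.contract e0).E // (H.contract e0).IsLinear L},
        C ^ (H.contract e0).components L.1 :=
  betaC_invariant_general R C H e0 hc
end

section
/- If H' is obtained from a semistable directed multigraph H by contracting a contractible edge, then det(I − A(H)) = det(I − A(H')). In particular, det(I − A(·)) is a Weyl function: it agrees on any two stabilizable semistable graphs with the same stabilization graph. -/
open Relation

noncomputable example (G : MDigraph) (C : ℤ) : ℤ := ∑ᶠ L : {L : Set G.E // G.IsLinear L}, C ^ G.components L.1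


section AuxProof

namespace MDigraph

open Matrix

open Classical in
lemma det_instIrrel {n : Type} (i1 : Fintype n) (d1 : DecidableEq n)
    (i2 : Fintype n) (d2 : DecidableEq n) (M : Matrix n n ℤ) :
    @Matrix.det n d1 i1 ℤ _ M = @Matrix.det n d2 i2 ℤ _ M := by
  cases Subsingleton.elim i1 i2
  cases Subsingleton.elim d1 d2
  rfl

set_option maxHeartbeats 1000000 in
lemma detIA_eq (G : MDigraph) [inst : Fintype G.V] [instD : DecidableEq G.V] :
    G.detIA = ((1 : Matrix G.V G.V ℤ) - G.adjMatrix).det := by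
  unfold detIA
  congr! <;> exact Subsingleton.elim _ _

lemma card_or_disjoint {α : Type} [Finite α] (p q r : α → Prop)
    (hdisj : ∀ e, q e → r e → False) :
    Nat.card {e // p e ∧ (q e ∨ r e)} = Nat.card {e // p e ∧ q e} + Nat.card {e // p e ∧ r e} := by
  classical
  rw [← Nat.card_sum]
  apply Nat.card_congr
  refine (Equiv.subtypeEquivRight (q := fun e => (p e ∧ q e) ∨ (p e ∧ r e))
    (fun e => by tauto)).trans (subtypeOrEquiv _ _ ?_)
  rw [Pi.disjoint_iff]
  intro e
  rw [disjoint_iff]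
  by_cases hq : p e ∧ q e
  · simp only [eq_iff_iff, iff_false, inf_Prop_eq, Prop.bot_eq_false]
    exact fun h => hdisj e h.1.2 h.2.2
  · simp only [eq_iff_iff, iff_false, inf_Prop_eq, Prop.bot_eq_false]
    exact fun h => hq h.1

lemma detIA_iso {G H : MDigraph} (f : Iso G H) : G.detIA = H.detIA := by
  classical
  letI : Fintype G.V := Fintype.ofFinite _
  letI : Fintype H.V := Fintype.ofFinite _
  rw [detIA_eq, detIA_eq]
  rw [← Matrix.det_submatrix_equiv_self f.vEquiv (1 - H.adjMatrix)]
  congr 1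
  have hcard : ∀ a b : G.V,
      Nat.card {e : H.E // H.src e = f.vEquiv a ∧ H.tgt e = f.vEquiv b}
        = Nat.card {e : G.E // G.src e = a ∧ G.tgt e = b} := by
    intro a b
    refine (Nat.card_congr (Equiv.subtypeEquiv f.eEquiv fun e => ?_)).symm
    rw [f.src_map, f.tgt_map]
    exact and_congr f.vEquiv.apply_eq_iff_eq.symm f.vEquiv.apply_eq_iff_eq.symm
  ext a b
  simp only [Matrix.submatrix_apply, Matrix.sub_apply, Matrix.one_apply, adjMatrix,
    Matrix.of_apply, Equiv.apply_eq_iff_eq, hcard]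

/-- Reversed digraph. -/
def rev (G : MDigraph) : MDigraph where
  V := G.V
  E := G.E
  src := G.tgt
  tgt := G.src

lemma detIA_rev (G : MDigraph) : (rev G).detIA = G.detIA := by
  classical
  letI : Fintype G.V := Fintype.ofFinite _
  letI : Fintype (rev G).V := Fintype.ofFinite _
  rw [detIA_eq, detIA_eq (G := G)]
  rw [← Matrix.det_transpose ((1 : Matrix G.V G.V ℤ) - G.adjMatrix)]
  congr 1
  rw [Matrix.transpose_sub, Matrix.transpose_one]
  congr 1
  ext a b
  show (rev G).adjMatrix a b = G.adjMatrix b a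
  have hc : Nat.card {e : G.E // G.tgt e = a ∧ G.src e = b}
      = Nat.card {e : G.E // G.src e = b ∧ G.tgt e = a} :=
    Nat.card_congr (Equiv.subtypeEquivRight fun e => and_comm)
  show ((Nat.card {e : G.E // G.tgt e = a ∧ G.src e = b} : ℤ))
      = ((Nat.card {e : G.E // G.src e = b ∧ G.tgt e = a} : ℤ))
  exact_mod_cast hc

/-- Contraction commutes with reversal. -/
noncomputable def rev_contract_iso (G : MDigraph) (e0 : G.E) :
    Iso ((rev G).contract e0) (rev (G.contract e0)) where
  vEquiv := Quot.congr (Equiv.refl _) (by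
    intro a b
    show ((rev G).mergeRel e0 a b) ↔ (G.mergeRel e0 a b)
    unfold mergeRel
    show (a = b ∨ ((a = G.tgt e0 ∨ a = G.src e0) ∧ (b = G.tgt e0 ∨ b = G.src e0))) ↔ _
    tauto)
  eEquiv := Equiv.refl _
  src_map e := rfl
  tgt_map e := rfl

lemma mergeRel_equivalence_s10 (G : MDigraph) (e0 : G.E) : Equivalence (G.mergeRel e0) := by
  constructor
  · intro a; exact Or.inl rfl
  · rintro a b (rfl | ⟨h1, h2⟩)
    · exact Or.inl rfl
    · exact Or.inr ⟨h2, h1⟩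
  · rintro a b c (rfl | ⟨h1, h2⟩) (rfl | ⟨h3, h4⟩)
    · exact Or.inl rfl
    · exact Or.inr ⟨h3, h4⟩
    · exact Or.inr ⟨h1, h2⟩
    · exact Or.inr ⟨h1, h4⟩

lemma mergeRel_mk_eq (G : MDigraph) (e0 : G.E) (a b : G.V) :
    (Quot.mk (G.mergeRel e0) a = Quot.mk (G.mergeRel e0) b) ↔ G.mergeRel e0 a b := by
  rw [Quot.eq]
  exact (mergeRel_equivalence_s10 G e0).eqvGen_iff

set_option maxHeartbeats 1000000 in
lemma detIA_contract_out (G : MDigraph) (e0 : G.E) (hne : G.src e0 ≠ G.tgt e0)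
    (h1 : G.degOut (G.src e0) = 1) : G.detIA = (G.contract e0).detIA := by
  classical
  letI : Fintype G.V := Fintype.ofFinite _
  letI : Fintype (G.contract e0).V := Fintype.ofFinite _
  set u := G.src e0 with hu
  set v := G.tgt e0 with hv
  -- e0 is the unique edge out of u
  have huniq : ∀ e : G.E, G.src e = u → e = e0 := by
    intro e he
    have hsub := (Nat.card_eq_one_iff_unique.mp h1).1
    exact congrArg Subtype.val
      (hsub.allEq (⟨e, he⟩ : {e : G.E // G.src e = u}) ⟨e0, rfl⟩)
  -- adjacency row at u
  have hAu : ∀ b : G.V, G.adjMatrix u b = if b = v then 1 else 0 := by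
    intro b
    show ((Nat.card {e : G.E // G.src e = u ∧ G.tgt e = b} : ℤ)) = _
    by_cases hb : b = v
    · subst hb
      rw [if_pos rfl]
      norm_cast
      rw [Nat.card_eq_one_iff_unique]
      constructor
      · constructor
        intro x y
        ext
        rw [huniq x.1 x.2.1, huniq y.1 y.2.1]
      · exact ⟨e0, rfl, rfl⟩
    · rw [if_neg hb]
      norm_cast
      have : IsEmpty {e : G.E // G.src e = u ∧ G.tgt e = b} := by
        constructor
        rintro ⟨e, he1, he2⟩
        exact hb ((huniq e he1 ▸ he2 : G.tgt e0 = b).symm ▸ rfl)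
      exact Nat.card_of_isEmpty
  have hvu : v ≠ u := Ne.symm hne
  -- the quotient vertex set is equivalent to V \ {u}
  let f : G.V → {x : G.V // x ≠ u} := fun a => if h : a = u then ⟨v, hvu⟩ else ⟨a, h⟩
  have hfpair : ∀ c : G.V, (c = u ∨ c = v) → f c = ⟨v, hvu⟩ := by
    rintro c (rfl | rfl)
    · simp [f]
    · by_cases hc : v = u
      · exact absurd hc hvu
      · simp [f, hc]
  have hf : ∀ a b : G.V, G.mergeRel e0 a b → f a = f b := by
    rintro a b (rfl | ⟨ha, hb⟩)
    · rfl
    · rw [hfpair a ha, hfpair b hb]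
  let φ : (G.contract e0).V ≃ {x : G.V // x ≠ u} :=
    { toFun := Quot.lift f hf
      invFun := fun x => Quot.mk _ x.1
      left_inv := by
        refine Quot.ind ?_
        intro a
        by_cases h : a = u
        · show Quot.mk _ (f a).1 = Quot.mk _ a
          rw [hfpair a (Or.inl h)]
          exact Quot.sound (Or.inr ⟨Or.inr rfl, Or.inl h⟩)
        · show Quot.mk _ (f a).1 = Quot.mk _ a
          simp [f, h]
      right_inv := by
        intro x
        show f x.1 = x
        simp [f, x.2] }
  -- the contracted adjacency matrix, reindexed
  have hA' : ∀ a b : {x : G.V // x ≠ u},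
      (G.contract e0).adjMatrix (φ.symm a) (φ.symm b)
        = G.adjMatrix a.1 b.1 + (if b.1 = v then G.adjMatrix a.1 u else 0) := by
    intro a b
    show ((Nat.card {e : {e : G.E // e ≠ e0} //
        Quot.mk _ (G.src e.1) = Quot.mk _ a.1 ∧ Quot.mk _ (G.tgt e.1) = Quot.mk _ b.1} : ℤ)) = _
    have key : ∀ e : G.E, e ≠ e0 →
        ((Quot.mk (G.mergeRel e0) (G.src e) = Quot.mk _ a.1 ∧
          Quot.mk (G.mergeRel e0) (G.tgt e) = Quot.mk _ b.1)
          ↔ (G.src e = a.1 ∧ (G.tgt e = b.1 ∨ (b.1 = v ∧ G.tgt e = u)))) := by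
      intro e he
      rw [mergeRel_mk_eq, mergeRel_mk_eq]
      have hsrc : G.src e ≠ u := fun h => he (huniq e h)
      unfold mergeRel
      constructor
      · rintro ⟨hs, ht⟩
        have hsa : G.src e = a.1 := by
          rcases hs with h | ⟨h1, h2⟩
          · exact h
          · rcases h1 with h1 | h1
            · exact absurd h1 hsrc
            · rcases h2 with h2 | h2
              · exact absurd h2 a.2
              · rw [h1, ← h2]
        refine ⟨hsa, ?_⟩
        rcases ht with h | ⟨h1, h2⟩
        · exact Or.inl h
        · rcases h2 with h2 | h2
          · exact absurd h2 b.2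
          · rcases h1 with h1 | h1
            · exact Or.inr ⟨h2, h1⟩
            · exact Or.inl (h1.trans h2.symm)
      · rintro ⟨hs, ht⟩
        refine ⟨Or.inl hs, ?_⟩
        rcases ht with h | ⟨hbv, htu⟩
        · exact Or.inl h
        · exact Or.inr ⟨Or.inl htu, Or.inr hbv⟩
    have hcongr : Nat.card {e : {e : G.E // e ≠ e0} //
        Quot.mk (G.mergeRel e0) (G.src e.1) = Quot.mk (G.mergeRel e0) a.1
          ∧ Quot.mk (G.mergeRel e0) (G.tgt e.1) = Quot.mk (G.mergeRel e0) b.1}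
        = Nat.card {e : G.E //
            G.src e = a.1 ∧ (G.tgt e = b.1 ∨ (b.1 = v ∧ G.tgt e = u))} := by
      apply Nat.card_congr
      refine (Equiv.subtypeSubtypeEquivSubtypeInter (fun e : G.E => e ≠ e0)
        (fun e : G.E => Quot.mk (G.mergeRel e0) (G.src e) = Quot.mk (G.mergeRel e0) a.1
          ∧ Quot.mk (G.mergeRel e0) (G.tgt e) = Quot.mk (G.mergeRel e0) b.1)).trans
        (Equiv.subtypeEquivRight fun e => ?_)
      constructor
      · rintro ⟨he, h⟩
        exact (key e he).mp h
      · rintro ⟨hs, ht⟩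
        have he : e ≠ e0 := by
          intro h
          apply a.2
          rw [← hs, h]
        exact ⟨he, (key e he).mpr ⟨hs, ht⟩⟩
    rw [hcongr]
    by_cases hb : b.1 = v
    · rw [if_pos hb]
      have hsplit : Nat.card {e : G.E //
            G.src e = a.1 ∧ (G.tgt e = b.1 ∨ (b.1 = v ∧ G.tgt e = u))}
          = Nat.card {e : G.E // G.src e = a.1 ∧ G.tgt e = b.1}
            + Nat.card {e : G.E // G.src e = a.1 ∧ (b.1 = v ∧ G.tgt e = u)} := by
        apply card_or_disjoint
        intro e h1 h2
        apply hne
        rw [← h2.2, h1]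
        exact hb
      have hc2 : Nat.card {e : G.E // G.src e = a.1 ∧ (b.1 = v ∧ G.tgt e = u)}
          = Nat.card {e : G.E // G.src e = a.1 ∧ G.tgt e = u} :=
        Nat.card_congr (Equiv.subtypeEquivRight fun e =>
          and_congr Iff.rfl ⟨fun h => h.2, fun h => ⟨hb, h⟩⟩)
      rw [hsplit, hc2]
      push_cast
      rfl
    · rw [if_neg hb, add_zero]
      have hc2 : Nat.card {e : G.E //
            G.src e = a.1 ∧ (G.tgt e = b.1 ∨ (b.1 = v ∧ G.tgt e = u))}
          = Nat.card {e : G.E // G.src e = a.1 ∧ G.tgt e = b.1} :=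
        Nat.card_congr (Equiv.subtypeEquivRight fun e =>
          and_congr Iff.rfl ⟨fun h => h.elim id (fun h' => absurd h'.1 hb), Or.inl⟩)
      rw [hc2]
      rfl
  -- block decomposition
  let ψ : (Unit ⊕ {x : G.V // x ≠ u}) ≃ G.V :=
    { toFun := fun s => Sum.elim (fun _ => u) Subtype.val s
      invFun := fun x => if h : x = u then Sum.inl () else Sum.inr ⟨x, h⟩
      left_inv := by
        rintro (⟨⟩ | ⟨x, hx⟩)
        · simp
        · simp [hx]
      right_inv := by
        intro x
        by_cases h : x = u <;> simp [h] }
  rw [detIA_eq, detIA_eq]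
  rw [← Matrix.det_submatrix_equiv_self ψ ((1 : Matrix G.V G.V ℤ) - G.adjMatrix)]
  rw [← Matrix.det_submatrix_equiv_self φ.symm
    ((1 : Matrix (G.contract e0).V (G.contract e0).V ℤ) - (G.contract e0).adjMatrix)]
  have hblock : ((1 : Matrix G.V G.V ℤ) - G.adjMatrix).submatrix ψ ψ
      = Matrix.fromBlocks 1
          (Matrix.of fun (_ : Unit) (b : {x : G.V // x ≠ u}) => if b.1 = v then (-1 : ℤ) else 0)
          (Matrix.of fun (a : {x : G.V // x ≠ u}) (_ : Unit) => -(G.adjMatrix a.1 u))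
          (Matrix.of fun (a b : {x : G.V // x ≠ u}) =>
            (if a = b then (1 : ℤ) else 0) - G.adjMatrix a.1 b.1) := by
    ext i j
    rcases i with _ | a <;> rcases j with _ | b
    · show (1 : Matrix G.V G.V ℤ) u u - G.adjMatrix u u = _
      rw [Matrix.one_apply_eq, hAu u, if_neg (Ne.symm hvu)]
      simp [Matrix.fromBlocks, Matrix.one_apply]
    · show (1 : Matrix G.V G.V ℤ) u b.1 - G.adjMatrix u b.1 = _
      rw [Matrix.one_apply_ne (Ne.symm b.2), hAu b.1]
      simp [Matrix.fromBlocks]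
      by_cases h : b.1 = v <;> simp [h]
    · show (1 : Matrix G.V G.V ℤ) a.1 u - G.adjMatrix a.1 u = _
      rw [Matrix.one_apply_ne a.2]
      simp [Matrix.fromBlocks]
    · show (1 : Matrix G.V G.V ℤ) a.1 b.1 - G.adjMatrix a.1 b.1 = _
      simp only [Matrix.fromBlocks, Matrix.of_apply, Sum.elim_inr]
      congr 1
      rw [Matrix.one_apply]
      by_cases h : a = b
      · rw [if_pos h, if_pos (congrArg Subtype.val h)]
      · rw [if_neg h, if_neg (fun h' => h (Subtype.ext h'))]
  rw [hblock, Matrix.det_fromBlocks_one₁₁]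
  congr 1
  ext a b
  rw [Matrix.sub_apply, Matrix.mul_apply]
  rw [Finset.sum_eq_single ()]
  rotate_left
  · intro c _ hc
    exact absurd rfl hc
  · intro h
    exact absurd (Finset.mem_univ ()) h
  show ((if a = b then (1 : ℤ) else 0) - G.adjMatrix a.1 b.1)
      - (-(G.adjMatrix a.1 u)) * (if b.1 = v then (-1 : ℤ) else 0) = _
  show _ = (1 : Matrix (G.contract e0).V (G.contract e0).V ℤ) (φ.symm a) (φ.symm b)
      - (G.contract e0).adjMatrix (φ.symm a) (φ.symm b)
  rw [hA' a b]
  have hone : (1 : Matrix (G.contract e0).V (G.contract e0).V ℤ) (φ.symm a) (φ.symm b)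
      = if a = b then 1 else 0 := by
    rw [Matrix.one_apply]
    by_cases h : a = b
    · rw [if_pos (congrArg φ.symm h), if_pos h]
    · rw [if_neg (fun h' => h (φ.symm.injective h')), if_neg h]
  rw [hone]
  by_cases h : b.1 = v <;> simp [h] <;> ring

lemma detIA_contractStep {G H : MDigraph} (h : ContractStep G H) : G.detIA = H.detIA := by
  obtain ⟨e0, ⟨hne, hdeg⟩, ⟨iso⟩⟩ := h
  have hmain : G.detIA = (G.contract e0).detIA := by
    rcases hdeg with h1 | h2
    · exact detIA_contract_out G e0 hne h1
    · have hr : (rev G).detIA = ((rev G).contract e0).detIA := by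
        apply detIA_contract_out (rev G) e0
        · exact fun h => hne h.symm
        · exact h2
      calc G.detIA = (rev G).detIA := (detIA_rev G).symm
        _ = ((rev G).contract e0).detIA := hr
        _ = (rev (G.contract e0)).detIA := detIA_iso (rev_contract_iso G e0)
        _ = (G.contract e0).detIA := detIA_rev _
  rw [hmain, detIA_iso iso]

lemma detIA_reflTrans {G H : MDigraph} (h : Relation.ReflTransGen ContractStep G H) :
    G.detIA = H.detIA := by
  induction h with
  | refl => rfl
  | tail _ hstep ih => exact ih.trans (detIA_contractStep hstep)

end MDigraph

end AuxProof

/-- det(I − A(·)) is invariant under contraction of a contractible edge of a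
semistable graph, and is a Weyl function: it agrees on stabilizable semistable graphs
with the same stabilization graph. -/
theorem detIA_weyl_function :
    (∀ H H' : MDigraph, H.Semistable → MDigraph.ContractStep H H' → H.detIA = H'.detIA) ∧
    (∀ H₁ H₂ G : MDigraph, H₁.Semistable → H₂.Semistable →
      H₁.IsStabilization G → H₂.IsStabilization G → H₁.detIA = H₂.detIA) := by
  constructor
  · intro H H' _ h
    exact MDigraph.detIA_contractStep h
  · intro H₁ H₂ G _ _ h₁ h₂
    exact (MDigraph.detIA_reflTrans h₁.1).trans (MDigraph.detIA_reflTrans h₂.1).symm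
end
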